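/- Two bounded automorphisms of the regular rooted d-ary tree T are conjugate in the full automorphism group Aut(T) if and only if they are conjugate in the group F(X) of finite-state automorphisms. -/

import Mathlib

open List

/-- Vertices of the rooted `d`-ary tree `T`: finite words over the alphabet
`X = Fin d`. -/
abbrev Vertex (d : ℕ) := List (Fin d)

/-- `g` is an automorphism of the rooted `d`-ary tree: a bijection of the
vertex set `X*` preserving word length and the prefix relation. -/
def IsTreeAut {d : ℕ} (g : Equiv.Perm (Vertex d)) : Prop :=
  (∀ v : Vertex d, (g v).length = v.length) ∧
    ∀ v w : Vertex d, g v <+: g (v ++ w)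

theorem IsTreeAut.prefix_mono {d : ℕ} {g : Equiv.Perm (Vertex d)} (hg : IsTreeAut g)
    {u u' : Vertex d} (h : u <+: u') : g u <+: g u' := by
  obtain ⟨t, rfl⟩ := h
  exact hg.2 u t

/-- The automorphism group `Aut(T)` of the rooted `d`-ary tree, as a subgroup
of the group of permutations of the vertex set. -/
def treeAut (d : ℕ) : Subgroup (Equiv.Perm (Vertex d)) where
  carrier := {g | IsTreeAut g}
  one_mem' := ⟨fun _ => rfl, fun v w => ⟨w, rfl⟩⟩
  mul_mem' := by
    intro g h hg hh
    obtain ⟨hg1, hg2⟩ := hg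
    obtain ⟨hh1, hh2⟩ := hh
    refine ⟨fun v => ?_, fun v w => ?_⟩
    · simp [Equiv.Perm.mul_apply, hg1, hh1]
    · obtain ⟨t, ht⟩ := hh2 v w
      simp only [Equiv.Perm.mul_apply]
      rw [← ht]
      exact hg2 (h v) t
  inv_mem' := by
    intro g hgmem
    obtain ⟨hg1, hg2⟩ := hgmem
    have hg : IsTreeAut g := ⟨hg1, hg2⟩
    have hlen' : ∀ v : Vertex d, (g⁻¹ v).length = v.length := by
      intro v
      conv_rhs => rw [← (show g (g⁻¹ v) = v from g.apply_symm_apply v)]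
      rw [hg1]
    refine ⟨hlen', fun v w => ?_⟩
    have hle : (g⁻¹ v).length ≤ (g⁻¹ (v ++ w)).length := by
      have h1 := hlen' v
      have h2 := hlen' (v ++ w)
      rw [List.length_append] at h2
      omega
    have htp : (g⁻¹ (v ++ w)).take (g⁻¹ v).length <+: g⁻¹ (v ++ w) :=
      List.take_prefix _ _
    have hgtp : g ((g⁻¹ (v ++ w)).take (g⁻¹ v).length) <+: v ++ w := by
      have := hg.prefix_mono htp
      rwa [(show g (g⁻¹ (v ++ w)) = v ++ w from g.apply_symm_apply (v ++ w))] at this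
    have hlen_tp : (g ((g⁻¹ (v ++ w)).take (g⁻¹ v).length)).length = v.length := by
      rw [hg1, List.length_take, min_eq_left hle, hlen' v]
    have hveq : g ((g⁻¹ (v ++ w)).take (g⁻¹ v).length) = v := by
      have h1 := List.prefix_iff_eq_take.mp hgtp
      have h2 := List.prefix_iff_eq_take.mp (List.prefix_append v w)
      rw [h1, hlen_tp]
      exact h2.symm
    have hkey : (g⁻¹ (v ++ w)).take (g⁻¹ v).length = g⁻¹ v := by
      apply g.injective
      rw [hveq, (show g (g⁻¹ v) = v from g.apply_symm_apply v)]
    rw [← hkey]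
    exact htp

open scoped Classical in
/-- The state (section) `g|_v` of `g` at the vertex `v` : the unique
automorphism satisfying `g (v ++ w) = g v ++ (g|_v) w` for all `w`. -/
noncomputable def state {d : ℕ} (g : Equiv.Perm (Vertex d)) (v : Vertex d) :
    Equiv.Perm (Vertex d) :=
  if h : Function.Bijective (fun w : Vertex d => (g (v ++ w)).drop v.length) then
    Equiv.ofBijective _ h
  else 1

/-- A finite-state automorphism: one having finitely many states.  The
finite-state automorphisms form the group `F(X)`. -/
def FiniteState {d : ℕ} (g : Equiv.Perm (Vertex d)) : Prop :=
  (Set.range fun v : Vertex d => state g v).Finite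

/-- The cardinality of the orbit `Orb_a(v)` of the vertex `v` under the cyclic
group generated by `a`. -/
noncomputable def orbitCard {d : ℕ} (a : Equiv.Perm (Vertex d)) (v : Vertex d) : ℕ :=
  Nat.card (Set.range fun n : ℤ => (a ^ n) v)

/-- The orbit-signalizer `OS(a) = { a^m|_v : v ∈ X^*, m = |Orb_a(v)| }`. -/
noncomputable def OS {d : ℕ} (a : Equiv.Perm (Vertex d)) : Set (Equiv.Perm (Vertex d)) :=
  {s | ∃ v : Vertex d, s = state (a ^ orbitCard a v) v}

/-- `a` has finite orbit-signalizer. -/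
def FiniteOS {d : ℕ} (a : Equiv.Perm (Vertex d)) : Prop := (OS a).Finite

/-- A self-similar (state-closed) subgroup. -/
def SelfSimilar {d : ℕ} (G : Subgroup (Equiv.Perm (Vertex d))) : Prop :=
  ∀ g ∈ G, ∀ v : Vertex d, state g v ∈ G

/-- A contracting group: there is a finite set `N ⊆ G` such that every
`g ∈ G` has all its states in `N` from some level on. -/
def ContractingGroup {d : ℕ} (G : Subgroup (Equiv.Perm (Vertex d))) : Prop :=
  ∃ N : Set (Equiv.Perm (Vertex d)), N.Finite ∧ N ⊆ (G : Set (Equiv.Perm (Vertex d))) ∧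
    ∀ g ∈ G, ∃ n : ℕ, ∀ v : Vertex d, n ≤ v.length → state g v ∈ N

/-- A contracting automorphism: the self-similar group generated by all of its
states is contracting. -/
def ContractingAut {d : ℕ} (f : Equiv.Perm (Vertex d)) : Prop :=
  ContractingGroup (Subgroup.closure (Set.range fun v : Vertex d => state f v))

/-- The activity sequence `θ_k(g)`: the number of vertices `v` of level `k`
whose state `g|_v` acts nontrivially on the first level `X`. -/
noncomputable def theta {d : ℕ} (g : Equiv.Perm (Vertex d)) (k : ℕ) : ℕ :=
  Nat.card {v : Vertex d // v.length = k ∧ ∃ x : Fin d, state g v [x] ≠ [x]}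

/-- A bounded automorphism: a finite-state automorphism with bounded activity
sequence.  The bounded automorphisms form the group `Pol(0)`. -/
def BoundedAut {d : ℕ} (g : Equiv.Perm (Vertex d)) : Prop :=
  FiniteState g ∧ ∃ C : ℕ, ∀ k : ℕ, theta g k ≤ C

/-- A polynomial automorphism (an element of `Pol(∞)`): a finite-state
automorphism whose activity sequence is polynomially bounded. -/
def PolyAut {d : ℕ} (g : Equiv.Perm (Vertex d)) : Prop :=
  FiniteState g ∧ ∃ p : Polynomial ℕ, ∀ k : ℕ, theta g k ≤ p.eval k

/-- A finitary automorphism (an element of `Pol(-1)`): all states at some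
level are trivial. -/
def Finitary {d : ℕ} (g : Equiv.Perm (Vertex d)) : Prop :=
  ∃ k : ℕ, ∀ v : Vertex d, v.length = k → state g v = 1

/-- A functionally recursive automorphism: a member of some finitely generated
self-similar subgroup of `Aut(T)`.  These form the group `FR(X)`. -/
def FunctionallyRecursive {d : ℕ} (g : Equiv.Perm (Vertex d)) : Prop :=
  ∃ G : Subgroup (Equiv.Perm (Vertex d)), G ≤ treeAut d ∧ SelfSimilar G ∧
    (∃ S : Set (Equiv.Perm (Vertex d)), S.Finite ∧ G = Subgroup.closure S) ∧ g ∈ G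

/-!
Let `h` conjugate `a` to `b`. Choosing `h` as a function of the pair `(a, b)` alone, build a
new conjugator `f_(a,b)` by a wreath recursion: on the first level it acts like `h`; for a letter
`x = a^i r` on the `a`-cycle of length `m` through the chosen representative `r`, its state at
`x` is `b^i|_(h r) * f_(a^m|_r, b^m|_(h r)) * (a^i|_r)⁻¹`. The pairs reached this way lie in
`OS(a) × OS(b)`, and unwinding the recursion writes every state of `f_(a,b)` as
`b^l|_z' * f_q * (a^k|_z)⁻¹` with `k`, `l` below the orbit lengths of `z`, `z'`. For a bounded
automorphism only boundedly many factors `a|_(a^j u)` of `a^k|_u` are nontrivial, so these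
partial powers form a finite set, and `f_(a,b)` is finite-state.
-/

open Function

namespace Equiv.Perm

variable {α : Type*}

section MinimalPeriod

variable {σ : Equiv.Perm α} {x : α}

theorem pow_apply_eq_self_iff_minimalPeriod_dvd {n : ℕ} :
    (σ ^ n) x = x ↔ minimalPeriod σ x ∣ n := by
  rw [← isPeriodicPt_iff_minimalPeriod_dvd, IsPeriodicPt, IsFixedPt, iterate_eq_pow]

theorem pow_minimalPeriod_apply : (σ ^ minimalPeriod σ x) x = x :=
  pow_apply_eq_self_iff_minimalPeriod_dvd.mpr dvd_rfl

theorem minimalPeriod_conj (τ : Equiv.Perm α) :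
    minimalPeriod ⇑(τ * σ * τ⁻¹) (τ x) = minimalPeriod σ x := by
  refine eq_of_forall_dvd fun n => ?_
  rw [← pow_apply_eq_self_iff_minimalPeriod_dvd, ← pow_apply_eq_self_iff_minimalPeriod_dvd,
    conj_pow]
  simp

end MinimalPeriod

variable (σ : Equiv.Perm α) (x : α)

/-- A point on the cycle of `σ` through `x`, chosen as a function of the cycle alone. -/
noncomputable def cycleRep : α := (Quotient.mk (SameCycle.setoid σ) x).out

theorem sameCycle_cycleRep : SameCycle σ (cycleRep σ x) x :=
  Quotient.mk_out (s := SameCycle.setoid σ) x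

/-- The position of `x` on its cycle, counted from `cycleRep σ x`. -/
noncomputable def cycleIndex : ℕ :=
  ((sameCycle_cycleRep σ x).choose % (minimalPeriod σ (cycleRep σ x) : ℤ)).toNat

variable {σ x}

theorem cycleRep_apply_self : cycleRep σ (σ x) = cycleRep σ x :=
  congrArg Quotient.out (Quotient.sound (sameCycle_apply_left.mpr (SameCycle.refl σ x)))

theorem cycleIndex_lt (h : cycleRep σ x ∈ periodicPts σ) :
    cycleIndex σ x < minimalPeriod σ (cycleRep σ x) := by
  have hm : (0 : ℤ) < minimalPeriod σ (cycleRep σ x) := by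
    exact_mod_cast minimalPeriod_pos_of_mem_periodicPts h
  have := Int.emod_lt_of_pos (sameCycle_cycleRep σ x).choose hm
  have := Int.emod_nonneg (sameCycle_cycleRep σ x).choose hm.ne'
  rw [cycleIndex]
  omega

theorem pow_cycleIndex_apply_cycleRep (h : cycleRep σ x ∈ periodicPts σ) :
    (σ ^ cycleIndex σ x) (cycleRep σ x) = x := by
  have hm : (0 : ℤ) < minimalPeriod σ (cycleRep σ x) := by
    exact_mod_cast minimalPeriod_pos_of_mem_periodicPts h
  rw [cycleIndex, ← zpow_natCast, Int.toNat_of_nonneg (Int.emod_nonneg _ hm.ne')]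
  exact (MulAction.zpow_smul_mod_minimalPeriod σ (cycleRep σ x) _).trans
    (sameCycle_cycleRep σ x).choose_spec

theorem cycleIndex_eq_of_pow_apply (h : cycleRep σ x ∈ periodicPts σ) {j : ℕ}
    (hj : j < minimalPeriod σ (cycleRep σ x)) (hx : (σ ^ j) (cycleRep σ x) = x) :
    cycleIndex σ x = j := by
  refine iterate_injOn_Iio_minimalPeriod (cycleIndex_lt h) hj ?_
  simpa only [iterate_eq_pow, pow_cycleIndex_apply_cycleRep h] using hx.symm

theorem cycleIndex_apply_self (h : cycleRep σ x ∈ periodicPts σ) :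
    cycleIndex σ (σ x) = (cycleIndex σ x + 1) % minimalPeriod σ (cycleRep σ x) := by
  have h' : cycleRep σ (σ x) ∈ periodicPts σ := by rwa [cycleRep_apply_self]
  refine cycleIndex_eq_of_pow_apply h' ?_ ?_ <;> rw [cycleRep_apply_self]
  · exact Nat.mod_lt _ (minimalPeriod_pos_of_mem_periodicPts h)
  · refine (MulAction.pow_smul_mod_minimalPeriod σ _ _).trans ?_
    rw [Perm.smul_def, pow_succ', mul_apply, pow_cycleIndex_apply_cycleRep h]

end Equiv.Perm

theorem Vertex.induction_on_length {d : ℕ} {motive : Vertex d → Prop} (nil : motive [])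
    (cons : ∀ x w, (∀ w' : Vertex d, w'.length = w.length → motive w') → motive (x :: w))
    (v : Vertex d) : motive v := by
  induction h : v.length generalizing v with
  | zero => rwa [List.length_eq_zero_iff.mp h]
  | succ n ih =>
    obtain ⟨x, w, rfl⟩ := List.exists_of_length_succ v h
    exact cons x w fun w' hw' => ih w' (by simp_all)

theorem bijective_of_injective_of_length_eq {d : ℕ} {f : Vertex d → Vertex d}
    (hf : Injective f) (hlen : ∀ v, (f v).length = v.length) : Bijective f := by
  refine ⟨hf, fun u => ?_⟩
  set level := {v : Vertex d | v.length = u.length}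
  have hmaps : Set.MapsTo f level level := fun v hv => (hlen v).trans hv
  have : Finite level := (List.finite_length_eq _ _).to_subtype
  obtain ⟨⟨v, _⟩, hv⟩ :=
    Finite.injective_iff_surjective.mp (hmaps.restrict_inj.mpr hf.injOn) ⟨u, rfl⟩
  exact ⟨v, congrArg Subtype.val hv⟩

namespace IsTreeAut

variable {d : ℕ} {g h : Equiv.Perm (Vertex d)}

theorem length_apply (hg : IsTreeAut g) (v : Vertex d) : (g v).length = v.length := hg.1 v

theorem apply_nil (hg : IsTreeAut g) : g [] = [] :=
  List.length_eq_zero_iff.mp (hg.length_apply [])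

theorem one : IsTreeAut (1 : Equiv.Perm (Vertex d)) := (treeAut d).one_mem

theorem mul (hg : IsTreeAut g) (hh : IsTreeAut h) : IsTreeAut (g * h) :=
  (treeAut d).mul_mem hg hh

theorem inv (hg : IsTreeAut g) : IsTreeAut g⁻¹ := (treeAut d).inv_mem hg

theorem pow (hg : IsTreeAut g) (n : ℕ) : IsTreeAut (g ^ n) := (treeAut d).pow_mem hg n

theorem apply_append_eq_append_drop (hg : IsTreeAut g) (v w : Vertex d) :
    g (v ++ w) = g v ++ (g (v ++ w)).drop v.length := by
  obtain ⟨t, ht⟩ := hg.2 v w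
  rw [← ht, ← hg.length_apply v, List.drop_left]

theorem bijective_drop_apply_append (hg : IsTreeAut g) (v : Vertex d) :
    Bijective fun w : Vertex d => (g (v ++ w)).drop v.length := by
  refine ⟨fun w₁ w₂ hw => ?_, fun u => ?_⟩
  · have : g (v ++ w₁) = g (v ++ w₂) := by
      rw [hg.apply_append_eq_append_drop, hg.apply_append_eq_append_drop v w₂]
      exact congrArg _ hw
    exact List.append_cancel_left (g.injective this)
  · obtain ⟨w, hw⟩ : v <+: g⁻¹ (g v ++ u) := by simpa using hg.inv.2 (g v) u
    exact ⟨w, by simp [hw, ← hg.length_apply v]⟩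

theorem state_apply (hg : IsTreeAut g) (v w : Vertex d) :
    state g v w = (g (v ++ w)).drop v.length := by
  rw [state, dif_pos (hg.bijective_drop_apply_append v)]
  rfl

theorem apply_append (hg : IsTreeAut g) (v w : Vertex d) :
    g (v ++ w) = g v ++ state g v w := by
  rw [hg.state_apply]
  exact hg.apply_append_eq_append_drop v w

end IsTreeAut

theorem IsTreeAut.stateAt {d : ℕ} {g : Equiv.Perm (Vertex d)} (hg : IsTreeAut g)
    (v : Vertex d) : IsTreeAut (state g v) := by
  refine ⟨fun w => ?_, fun w u => ⟨state g (v ++ w) u, ?_⟩⟩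
  · have := congrArg List.length (hg.apply_append v w)
    simp only [List.length_append, hg.length_apply] at this
    omega
  · have := hg.apply_append (v ++ w) u
    rw [hg.apply_append v w, List.append_assoc, List.append_assoc, hg.apply_append v,
      List.append_cancel_left_eq] at this
    exact this.symm

section State

variable {d : ℕ} {g h : Equiv.Perm (Vertex d)}

theorem state_mul (hg : IsTreeAut g) (hh : IsTreeAut h) (v : Vertex d) :
    state (g * h) v = state g (h v) * state h v := by
  ext1 w
  have := (hg.mul hh).apply_append v w
  rw [Equiv.Perm.mul_apply, hh.apply_append, hg.apply_append, Equiv.Perm.mul_apply,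
    List.append_cancel_left_eq] at this
  exact this.symm

@[simp]
theorem state_one (v : Vertex d) : state (1 : Equiv.Perm (Vertex d)) v = 1 := by
  ext1 w
  simp [IsTreeAut.one.state_apply]

theorem state_inv (hg : IsTreeAut g) (v : Vertex d) :
    state g⁻¹ v = (state g (g⁻¹ v))⁻¹ := by
  refine (inv_eq_of_mul_eq_one_right ?_).symm
  rw [← state_mul hg hg.inv, mul_inv_cancel, state_one]

theorem state_nil (hg : IsTreeAut g) : state g [] = g := by
  ext1 w
  simp [hg.state_apply]

theorem state_append (hg : IsTreeAut g) (u v : Vertex d) :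
    state g (u ++ v) = state (state g u) v := by
  ext1 w
  rw [(hg.stateAt u).state_apply, hg.state_apply, hg.state_apply, List.append_assoc,
    List.length_append, List.drop_drop, Nat.add_comm]

theorem state_pow_of_apply_eq_self (hg : IsTreeAut g) {v : Vertex d} (hv : g v = v) (n : ℕ) :
    state (g ^ n) v = state g v ^ n := by
  induction n with
  | zero => simp
  | succ n ih =>
    rw [pow_succ', state_mul hg (hg.pow n), ih,
      Equiv.Perm.pow_apply_eq_self_of_apply_eq_self hv n, pow_succ']

end State

/-- For a tree automorphism, `g [x] = [act g x]`; the default of `headD` is never used then. -/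
def act {d : ℕ} (g : Equiv.Perm (Vertex d)) (x : Fin d) : Fin d := (g [x]).headD x

section Act

variable {d : ℕ} {g h : Equiv.Perm (Vertex d)}

theorem IsTreeAut.apply_singleton (hg : IsTreeAut g) (x : Fin d) : g [x] = [act g x] := by
  obtain ⟨y, hy⟩ := List.length_eq_one_iff.mp (hg.length_apply [x])
  simp [act, hy]

theorem IsTreeAut.apply_cons (hg : IsTreeAut g) (x : Fin d) (w : Vertex d) :
    g (x :: w) = act g x :: state g [x] w := by
  simpa [hg.apply_singleton] using hg.apply_append [x] w

theorem act_mul (hg : IsTreeAut g) (hh : IsTreeAut h) (x : Fin d) :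
    act (g * h) x = act g (act h x) := by
  simpa [hh.apply_singleton, hg.apply_singleton] using ((hg.mul hh).apply_singleton x).symm

theorem act_injective (hg : IsTreeAut g) : Injective (act g) := fun x y hxy => by
  simpa [hg.apply_singleton, hxy] using g.injective (a₁ := [x]) (a₂ := [y])

theorem IsTreeAut.eq_one_of_state_apply_singleton (hg : IsTreeAut g)
    (h : ∀ v x, state g v [x] = [x]) : g = 1 := by
  ext1 v
  induction v generalizing g with
  | nil => exact hg.apply_nil
  | cons x w ih =>
    have hx : act g x = x := by
      simpa [hg.apply_singleton, state_nil hg] using h [] x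
    rw [hg.apply_cons, hx, ih (hg.stateAt [x]) fun v y => by rw [← state_append hg, h]]
    rfl

end Act

theorem orbitCard_eq_minimalPeriod {d : ℕ} (a : Equiv.Perm (Vertex d)) (v : Vertex d) :
    orbitCard a v = minimalPeriod a v := by
  have : (Set.range fun n : ℤ => (a ^ n) v) = MulAction.orbit (Subgroup.zpowers a) v := by
    ext u
    simp [MulAction.mem_orbit_iff, Subgroup.exists_zpowers, Subgroup.smul_def]
  rw [orbitCard, this, Nat.card_congr (MulAction.orbitZPowersEquiv a v), Nat.card_zmod]
  rfl

section Period

variable {d : ℕ} {a t : Equiv.Perm (Vertex d)}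

theorem IsTreeAut.mem_periodicPts (ha : IsTreeAut a) (v : Vertex d) : v ∈ periodicPts a := by
  set level := {u : Vertex d | u.length = v.length}
  have hmaps : Set.MapsTo a level level := fun u hu => (ha.length_apply u).trans hu
  have : Finite level := (List.finite_length_eq _ _).to_subtype
  obtain ⟨n, hn, hper⟩ :=
    (hmaps.restrict_inj.mpr a.injective.injOn).mem_periodicPts ⟨v, rfl⟩
  have : a^[n] v = v := by simpa [hmaps.coe_iterate_restrict] using congrArg Subtype.val hper.eq
  exact ⟨n, hn, this⟩

theorem IsTreeAut.minimalPeriod_pos (ha : IsTreeAut a) (v : Vertex d) :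
    0 < minimalPeriod a v :=
  minimalPeriod_pos_of_mem_periodicPts (ha.mem_periodicPts v)

theorem pow_mul_apply_append (ha : IsTreeAut a) {M : ℕ} {r : Vertex d} (hr : (a ^ M) r = r)
    (k : ℕ) (z : Vertex d) : (a ^ (M * k)) (r ++ z) = r ++ (state (a ^ M) r ^ k) z := by
  rw [pow_mul, ((ha.pow M).pow k).apply_append,
    Equiv.Perm.pow_apply_eq_self_of_apply_eq_self hr, state_pow_of_apply_eq_self (ha.pow M) hr]

theorem state_pow_mul_append (ha : IsTreeAut a) {M : ℕ} {r : Vertex d} (hr : (a ^ M) r = r)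
    (k : ℕ) (z : Vertex d) : state (a ^ (M * k)) (r ++ z) = state (state (a ^ M) r ^ k) z := by
  rw [state_append (ha.pow _), pow_mul, state_pow_of_apply_eq_self (ha.pow M) hr]

theorem minimalPeriod_append (ha : IsTreeAut a) (v z : Vertex d) :
    minimalPeriod a (v ++ z) =
      minimalPeriod a v * minimalPeriod (state (a ^ minimalPeriod a v) v) z := by
  refine eq_of_forall_dvd fun n => ?_
  rw [← Equiv.Perm.pow_apply_eq_self_iff_minimalPeriod_dvd]
  constructor
  · intro hn
    have hv : (a ^ n) v = v := by
      have := congrArg (List.take v.length) hn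
      rwa [(ha.pow n).apply_append, List.take_left' ((ha.pow n).length_apply v),
        List.take_left' rfl] at this
    obtain ⟨k, rfl⟩ := Equiv.Perm.pow_apply_eq_self_iff_minimalPeriod_dvd.mp hv
    rw [pow_mul_apply_append ha Equiv.Perm.pow_minimalPeriod_apply, List.append_cancel_left_eq,
      Equiv.Perm.pow_apply_eq_self_iff_minimalPeriod_dvd] at hn
    exact Nat.mul_dvd_mul_left _ hn
  · rintro ⟨k, rfl⟩
    rw [mul_assoc, pow_mul_apply_append ha Equiv.Perm.pow_minimalPeriod_apply,
      Equiv.Perm.pow_apply_eq_self_iff_minimalPeriod_dvd.mpr (dvd_mul_right _ k)]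

theorem self_mem_OS (ha : IsTreeAut a) : a ∈ OS a :=
  ⟨[], by rw [orbitCard_eq_minimalPeriod, minimalPeriod_eq_one_iff_isFixedPt.mpr ha.apply_nil,
    pow_one, state_nil ha]⟩

theorem state_pow_minimalPeriod_mem_OS (r : Vertex d) :
    state (a ^ minimalPeriod a r) r ∈ OS a :=
  ⟨r, by rw [orbitCard_eq_minimalPeriod]⟩

theorem OS_subset_of_mem (ha : IsTreeAut a) (ht : t ∈ OS a) : OS t ⊆ OS a := by
  obtain ⟨r, rfl⟩ := ht
  rintro _ ⟨z, rfl⟩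
  refine ⟨r ++ z, ?_⟩
  simp only [orbitCard_eq_minimalPeriod] at *
  rw [minimalPeriod_append ha, state_pow_mul_append ha Equiv.Perm.pow_minimalPeriod_apply]

end Period

def orbitPowStates {d : ℕ} (a : Equiv.Perm (Vertex d)) : Set (Equiv.Perm (Vertex d)) :=
  {s | ∃ u k, k ≤ minimalPeriod a u ∧ state (a ^ k) u = s}

def IsPartialOrbitState {d : ℕ} (a : Equiv.Perm (Vertex d)) (v : Vertex d)
    (s : Equiv.Perm (Vertex d)) : Prop :=
  ∃ z k, k < minimalPeriod a z ∧ (a ^ k) z = v ∧ state (a ^ k) z = s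

section OrbitStates

variable {d : ℕ} {a : Equiv.Perm (Vertex d)}

theorem OS_subset_orbitPowStates : OS a ⊆ orbitPowStates a := by
  rintro _ ⟨r, rfl⟩
  exact ⟨r, _, (orbitCard_eq_minimalPeriod a r).le, rfl⟩

theorem isPartialOrbitState_one (ha : IsTreeAut a) (v : Vertex d) :
    IsPartialOrbitState a v 1 :=
  ⟨v, 0, ha.minimalPeriod_pos v, rfl, by simp⟩

theorem IsPartialOrbitState.mem_orbitPowStates {v : Vertex d} {s : Equiv.Perm (Vertex d)}
    (hs : IsPartialOrbitState a v s) : s ∈ orbitPowStates a :=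
  let ⟨z, k, hk, _, hs⟩ := hs
  ⟨z, k, hk.le, hs⟩

theorem IsPartialOrbitState.append (ha : IsTreeAut a) {r u : Vertex d}
    {s : Equiv.Perm (Vertex d)} (hs : IsPartialOrbitState (state (a ^ minimalPeriod a r) r) u s)
    {i : ℕ} (hi : i < minimalPeriod a r) :
    IsPartialOrbitState a ((a ^ i) (r ++ u)) (state (a ^ i) (r ++ u) * s) := by
  obtain ⟨z, k, hk, rfl, rfl⟩ := hs
  have hr : (a ^ minimalPeriod a r) r = r := Equiv.Perm.pow_minimalPeriod_apply
  refine ⟨r ++ z, i + minimalPeriod a r * k, ?_, ?_, ?_⟩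
  · -- `i + m k < m (k + 1) ≤ m * period`
    rw [minimalPeriod_append ha]
    nlinarith
  · rw [pow_add, Equiv.Perm.mul_apply, pow_mul_apply_append ha hr]
  · rw [pow_add, state_mul (ha.pow _) (ha.pow _), pow_mul_apply_append ha hr,
      state_pow_mul_append ha hr]

end OrbitStates
section Bounded

open Finset Pointwise
open scoped Classical

variable {d : ℕ} {a : Equiv.Perm (Vertex d)}

theorem state_pow_mem_pow_card_filter (ha : IsTreeAut a) {S : Set (Equiv.Perm (Vertex d))}
    (hS : ∀ v, state a v ∈ S) (u : Vertex d) (k : ℕ) :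
    state (a ^ k) u ∈ S ^ #{j ∈ Finset.range k | state a ((a ^ j) u) ≠ 1} := by
  induction k with
  | zero => simp
  | succ k ih =>
    rw [pow_succ', state_mul ha (ha.pow k), Finset.range_add_one, filter_insert]
    by_cases hk : state a ((a ^ k) u) = 1
    · simpa [hk] using ih
    · rw [if_pos hk, card_insert_of_notMem (by simp), pow_succ']
      exact Set.mul_mem_mul (hS _) ih

theorem theta_eq_ncard (a : Equiv.Perm (Vertex d)) (k : ℕ) :
    theta a k = {v : Vertex d | v.length = k ∧ ∃ x, state a v [x] ≠ [x]}.ncard :=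
  (Nat.card_coe_set_eq _)

/-- Each nontrivial state `a|_(a^j u)` yields an active vertex `a^j u ++ w` with `w` of bounded
depth, and distinct orbit points yield distinct active vertices. -/
theorem BoundedAut.exists_card_filter_state_ne_one_le (ha : IsTreeAut a) (hb : BoundedAut a) :
    ∃ N, ∀ u : Vertex d,
      #{j ∈ Finset.range (minimalPeriod a u) | state a ((a ^ j) u) ≠ 1} ≤ N := by
  obtain ⟨hfs, C, hC⟩ := hb
  have hactive : ∀ s ∈ Set.range (state a), s ≠ 1 → ∃ w x, state s w [x] ≠ [x] := by
    rintro _ ⟨v, rfl⟩ hs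
    by_contra! h
    exact hs ((ha.stateAt v).eq_one_of_state_apply_singleton h)
  choose! w hw using hactive
  obtain ⟨D, hD⟩ := (hfs.image fun s => (w s).length).bddAbove
  refine ⟨(D + 1) * C, fun u => ?_⟩
  set active := fun k => {v : Vertex d | v.length = k ∧ ∃ x, state a v [x] ≠ [x]}
  set F := {j ∈ Finset.range (minimalPeriod a u) | state a ((a ^ j) u) ≠ 1}
  set f := fun j => (a ^ j) u ++ w (state a ((a ^ j) u))
  have hinj : Set.InjOn f F := by
    intro i hi j hj hij
    have := congrArg (List.take u.length) hij
    simp only [f, List.take_left' ((ha.pow _).length_apply u)] at this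
    simp only [F, coe_filter, Finset.mem_range, Set.mem_ofPred_eq] at hi hj
    simpa [← Equiv.Perm.iterate_eq_pow] using iterate_injOn_Iio_minimalPeriod hi.1 hj.1 this
  have hsub : f '' F ⊆ ⋃ ℓ : Fin (D + 1), active (u.length + ℓ) := by
    rintro _ ⟨j, hj, rfl⟩
    simp only [F, coe_filter, Finset.mem_range, Set.mem_ofPred_eq] at hj
    obtain ⟨x, hx⟩ := hw _ ⟨_, rfl⟩ hj.2
    have hlen : (w (state a ((a ^ j) u))).length ≤ D := hD ⟨_, ⟨(a ^ j) u, rfl⟩, rfl⟩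
    refine Set.mem_iUnion.mpr ⟨⟨(w (state a ((a ^ j) u))).length, by omega⟩, ?_, x, ?_⟩
    · simp [f, (ha.pow _).length_apply]
    · rwa [state_append ha]
  calc #F = (f '' F).ncard := by rw [hinj.ncard_image, Set.ncard_coe_finset]
    _ ≤ (⋃ ℓ : Fin (D + 1), active (u.length + ℓ)).ncard :=
        Set.ncard_le_ncard hsub (Set.finite_iUnion fun ℓ =>
          (List.finite_length_eq _ _).subset fun v hv => hv.1)
    _ ≤ ∑ ℓ : Fin (D + 1), (active (u.length + ℓ)).ncard := Set.ncard_iUnion_le_of_fintype _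
    _ ≤ ∑ ℓ : Fin (D + 1), C :=
        Finset.sum_le_sum fun ℓ _ => (theta_eq_ncard a _).symm ▸ hC _
    _ = (D + 1) * C := by simp

theorem BoundedAut.finite_orbitPowStates (ha : IsTreeAut a) (hb : BoundedAut a) :
    (orbitPowStates a).Finite := by
  obtain ⟨N, hN⟩ := hb.exists_card_filter_state_ne_one_le ha
  refine ((insert 1 hb.1.toFinset ^ N).finite_toSet).subset ?_
  rintro _ ⟨u, k, hk, rfl⟩
  rw [coe_pow]
  refine Set.pow_subset_pow_right (by simp) ((card_le_card ?_).trans (hN u))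
    (state_pow_mem_pow_card_filter ha
      (fun v => mem_coe.mpr (mem_insert_of_mem (hb.1.mem_toFinset.mpr ⟨v, rfl⟩))) u k)
  exact filter_subset_filter _ (Finset.range_subset_range.mpr hk)

end Bounded

/-- A wreath recursion: its solution `f` satisfies
`f p (x :: w) = head p x :: (left p x * f (next p x) * (right p x)⁻¹) w`. -/
structure WreathRecursion (d : ℕ) (P : Type*) where
  head : P → Fin d → Fin d
  left : P → Fin d → Equiv.Perm (Vertex d)
  right : P → Fin d → Equiv.Perm (Vertex d)
  next : P → Fin d → P
  head_injective : ∀ p, Injective (head p)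
  isTreeAut_left : ∀ p x, IsTreeAut (left p x)
  isTreeAut_right : ∀ p x, IsTreeAut (right p x)

namespace WreathRecursion

variable {d : ℕ} {P : Type*} (R : WreathRecursion d P)

/-- The recursion unfolded `n` times: the recursive call is on `(right p x)⁻¹ w`, which is not
a subterm of `x :: w`, so the number of unfoldings is passed explicitly. -/
def unroll : ℕ → P → Vertex d → Vertex d
  | 0, _, _ => []
  | _ + 1, _, [] => []
  | n + 1, p, x :: w => R.head p x :: R.left p x (unroll n (R.next p x) ((R.right p x)⁻¹ w))

def toFun (p : P) (v : Vertex d) : Vertex d := R.unroll v.length p v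

theorem toFun_cons (p : P) (x : Fin d) (w : Vertex d) :
    R.toFun p (x :: w) =
      R.head p x :: R.left p x (R.toFun (R.next p x) ((R.right p x)⁻¹ w)) := by
  simp only [toFun, List.length_cons, unroll, (R.isTreeAut_right p x).inv.length_apply]

theorem length_toFun (v : Vertex d) : ∀ p, (R.toFun p v).length = v.length := by
  induction v using Vertex.induction_on_length with
  | nil => exact fun _ => rfl
  | cons x w ih =>
    intro p
    rw [toFun_cons, List.length_cons, (R.isTreeAut_left p x).length_apply,
      ih _ ((R.isTreeAut_right p x).inv.length_apply w), List.length_cons,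
      (R.isTreeAut_right p x).inv.length_apply]

theorem toFun_injective (p : P) : Injective (R.toFun p) := by
  intro v v' h
  induction v using Vertex.induction_on_length generalizing p v' with
  | nil => simpa [R.length_toFun, eq_comm] using congrArg List.length h
  | cons x w ih =>
    obtain _ | ⟨x', w'⟩ := v'
    · simpa [R.length_toFun] using congrArg List.length h
    rw [toFun_cons, toFun_cons, List.cons.injEq] at h
    obtain rfl := R.head_injective p h.1
    have hw := ih _ ((R.isTreeAut_right p x).inv.length_apply w) _ ((R.left p x).injective h.2)
    rw [(R.right p x)⁻¹.injective hw]

theorem toFun_prefix (v : Vertex d) : ∀ p w, R.toFun p v <+: R.toFun p (v ++ w) := by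
  induction v using Vertex.induction_on_length with
  | nil => exact fun _ _ => List.nil_prefix
  | cons x v ih =>
    intro p w
    rw [List.cons_append, toFun_cons, toFun_cons, List.cons_prefix_cons,
      (R.isTreeAut_right p x).inv.apply_append]
    refine ⟨rfl, (R.isTreeAut_left p x).prefix_mono (ih _ ?_ _ _)⟩
    exact (R.isTreeAut_right p x).inv.length_apply v

noncomputable def solution (p : P) : Equiv.Perm (Vertex d) :=
  Equiv.ofBijective (R.toFun p)
    (bijective_of_injective_of_length_eq (R.toFun_injective p) fun v => R.length_toFun v p)

theorem isTreeAut_solution (p : P) : IsTreeAut (R.solution p) :=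
  ⟨fun v => R.length_toFun v p, fun v w => R.toFun_prefix v p w⟩

theorem solution_cons (p : P) (x : Fin d) (w : Vertex d) :
    R.solution p (x :: w) =
      R.head p x :: (R.left p x * R.solution (R.next p x) * (R.right p x)⁻¹) w :=
  R.toFun_cons p x w

theorem act_solution (p : P) (x : Fin d) : act (R.solution p) x = R.head p x := by
  rw [act, show [x] = x :: [] from rfl, solution_cons]
  rfl

theorem state_solution_singleton (p : P) (x : Fin d) :
    state (R.solution p) [x] = R.left p x * R.solution (R.next p x) * (R.right p x)⁻¹ := by
  ext1 w
  have := (R.isTreeAut_solution p).apply_cons x w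
  rw [solution_cons, List.cons.injEq] at this
  exact this.2.symm

end WreathRecursion

@[ext]
structure ConjPair (d : ℕ) where
  src : Equiv.Perm (Vertex d)
  tgt : Equiv.Perm (Vertex d)
  isTreeAut_src : IsTreeAut src
  exists_conj : ∃ h, IsTreeAut h ∧ h * src * h⁻¹ = tgt

namespace ConjPair

variable {d : ℕ} (p : ConjPair d)

noncomputable def someConj : Equiv.Perm (Vertex d) := p.exists_conj.choose

theorem isTreeAut_someConj : IsTreeAut p.someConj := p.exists_conj.choose_spec.1

theorem someConj_mul_src_mul_inv : p.someConj * p.src * p.someConj⁻¹ = p.tgt :=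
  p.exists_conj.choose_spec.2

theorem isTreeAut_tgt : IsTreeAut p.tgt := by
  rw [← p.someConj_mul_src_mul_inv]
  exact (p.isTreeAut_someConj.mul p.isTreeAut_src).mul p.isTreeAut_someConj.inv

theorem someConj_mul_src_pow (n : ℕ) : p.someConj * p.src ^ n = p.tgt ^ n * p.someConj := by
  rw [← p.someConj_mul_src_mul_inv, conj_pow, inv_mul_cancel_right]

theorem someConj_pow_apply (n : ℕ) (v : Vertex d) :
    p.someConj ((p.src ^ n) v) = (p.tgt ^ n) (p.someConj v) :=
  congrArg (· v) (p.someConj_mul_src_pow n)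

theorem minimalPeriod_tgt_someConj (v : Vertex d) :
    minimalPeriod p.tgt (p.someConj v) = minimalPeriod p.src v := by
  rw [← p.someConj_mul_src_mul_inv, Equiv.Perm.minimalPeriod_conj]

theorem act_someConj_act_src (x : Fin d) :
    act p.someConj (act p.src x) = act p.tgt (act p.someConj x) := by
  rw [← act_mul p.isTreeAut_someConj p.isTreeAut_src,
    ← act_mul p.isTreeAut_tgt p.isTreeAut_someConj, ← p.someConj_mul_src_mul_inv,
    inv_mul_cancel_right]

noncomputable def rep (x : Fin d) : Vertex d := Equiv.Perm.cycleRep p.src [x]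

noncomputable def index (x : Fin d) : ℕ := Equiv.Perm.cycleIndex p.src [x]

noncomputable def period (x : Fin d) : ℕ := minimalPeriod p.src (p.rep x)

theorem src_pow_period_rep (x : Fin d) : (p.src ^ p.period x) (p.rep x) = p.rep x :=
  Equiv.Perm.pow_minimalPeriod_apply

theorem src_pow_index_rep (x : Fin d) : (p.src ^ p.index x) (p.rep x) = [x] :=
  Equiv.Perm.pow_cycleIndex_apply_cycleRep (p.isTreeAut_src.mem_periodicPts _)

theorem index_lt_period (x : Fin d) : p.index x < p.period x :=
  Equiv.Perm.cycleIndex_lt (p.isTreeAut_src.mem_periodicPts _)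

theorem rep_act_src (x : Fin d) : p.rep (act p.src x) = p.rep x := by
  rw [rep, ← p.isTreeAut_src.apply_singleton, Equiv.Perm.cycleRep_apply_self, rep]

theorem index_act_src (x : Fin d) :
    p.index (act p.src x) = (p.index x + 1) % p.period x := by
  rw [index, ← p.isTreeAut_src.apply_singleton,
    Equiv.Perm.cycleIndex_apply_self (p.isTreeAut_src.mem_periodicPts _)]
  rfl

noncomputable def child (x : Fin d) : ConjPair d where
  src := state (p.src ^ p.period x) (p.rep x)
  tgt := state (p.tgt ^ p.period x) (p.someConj (p.rep x))
  isTreeAut_src := (p.isTreeAut_src.pow _).stateAt _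
  exists_conj := by
    refine ⟨state p.someConj (p.rep x), p.isTreeAut_someConj.stateAt _, ?_⟩
    have := congrArg (state · (p.rep x)) (p.someConj_mul_src_pow (p.period x))
    rw [state_mul p.isTreeAut_someConj (p.isTreeAut_src.pow _), p.src_pow_period_rep,
      state_mul (p.isTreeAut_tgt.pow _) p.isTreeAut_someConj] at this
    rw [this, mul_inv_cancel_right]

theorem child_act_src (x : Fin d) : p.child (act p.src x) = p.child x := by
  ext1 <;> simp only [child, period, rep_act_src]

noncomputable def right (x : Fin d) : Equiv.Perm (Vertex d) :=
  state (p.src ^ p.index x) (p.rep x)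

noncomputable def left (x : Fin d) : Equiv.Perm (Vertex d) :=
  state (p.tgt ^ p.index x) (p.someConj (p.rep x))

theorem isTreeAut_right (x : Fin d) : IsTreeAut (p.right x) := (p.isTreeAut_src.pow _).stateAt _

theorem isTreeAut_left (x : Fin d) : IsTreeAut (p.left x) := (p.isTreeAut_tgt.pow _).stateAt _

noncomputable def recursion : WreathRecursion d (ConjPair d) where
  head p := act p.someConj
  left p := p.left
  right p := p.right
  next p := p.child
  head_injective p := act_injective p.isTreeAut_someConj
  isTreeAut_left p := p.isTreeAut_left
  isTreeAut_right p := p.isTreeAut_right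

noncomputable def conjugator : Equiv.Perm (Vertex d) := recursion.solution p

theorem isTreeAut_conjugator : IsTreeAut p.conjugator := recursion.isTreeAut_solution p

theorem act_conjugator (x : Fin d) : act p.conjugator x = act p.someConj x :=
  recursion.act_solution p x

theorem state_conjugator_singleton (x : Fin d) :
    state p.conjugator [x] = p.left x * (p.child x).conjugator * (p.right x)⁻¹ :=
  recursion.state_solution_singleton p x

theorem conjugator_cons (x : Fin d) (w : Vertex d) :
    p.conjugator (x :: w) =
      act p.someConj x :: p.left x ((p.child x).conjugator ((p.right x)⁻¹ w)) :=
  recursion.solution_cons p x w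

theorem state_src_pow_index_succ (x : Fin d) :
    state (p.src ^ (p.index x + 1)) (p.rep x) = state p.src [x] * p.right x := by
  rw [pow_succ', state_mul p.isTreeAut_src (p.isTreeAut_src.pow _), p.src_pow_index_rep]
  rfl

theorem state_tgt_pow_index_succ (x : Fin d) :
    state (p.tgt ^ (p.index x + 1)) (p.someConj (p.rep x)) =
      state p.tgt [act p.someConj x] * p.left x := by
  rw [pow_succ', state_mul p.isTreeAut_tgt (p.isTreeAut_tgt.pow _), ← p.someConj_pow_apply,
    p.src_pow_index_rep, p.isTreeAut_someConj.apply_singleton]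
  rfl

theorem conjugator_apply_src (v : Vertex d) :
    ∀ p : ConjPair d, p.conjugator (p.src v) = p.tgt (p.conjugator v) := by
  induction v using Vertex.induction_on_length with
  | nil =>
    intro p
    simp [p.isTreeAut_src.apply_nil, p.isTreeAut_conjugator.apply_nil, p.isTreeAut_tgt.apply_nil]
  | cons x w ih =>
    intro p
    rw [p.isTreeAut_src.apply_cons, p.isTreeAut_conjugator.apply_cons,
      p.isTreeAut_conjugator.apply_cons, p.isTreeAut_tgt.apply_cons, act_conjugator,
      act_conjugator, act_someConj_act_src, state_conjugator_singleton, state_conjugator_singleton,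
      child_act_src, List.cons.injEq]
    refine ⟨rfl, ?_⟩
    simp only [right, left, rep_act_src, index_act_src]
    obtain hlt | heq : p.index x + 1 < p.period x ∨ p.index x + 1 = p.period x := by
      have := p.index_lt_period x
      omega
    · -- inside the cycle the index goes up by one, and the states compose
      rw [Nat.mod_eq_of_lt hlt, p.state_src_pow_index_succ, p.state_tgt_pow_index_succ]
      simp [mul_inv_rev, right, left]
    · -- wrapping around the cycle passes through the return maps of `p.child x`
      have hchild_src : (p.child x).src = state p.src [x] * p.right x := by
        rw [← p.state_src_pow_index_succ, heq]
        rfl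
      have hchild_tgt : (p.child x).tgt = state p.tgt [act p.someConj x] * p.left x := by
        rw [← p.state_tgt_pow_index_succ, heq]
        rfl
      rw [← heq, Nat.mod_self]
      have := ih _ ((p.isTreeAut_right x).inv.length_apply w) (p.child x)
      rw [hchild_src, hchild_tgt] at this
      simpa [right, left] using this

theorem child_src_mem_OS (x : Fin d) : (p.child x).src ∈ OS p.src :=
  state_pow_minimalPeriod_mem_OS _

theorem child_tgt_mem_OS (x : Fin d) : (p.child x).tgt ∈ OS p.tgt := by
  have := state_pow_minimalPeriod_mem_OS (a := p.tgt) (p.someConj (p.rep x))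
  rwa [p.minimalPeriod_tgt_someConj] at this

theorem src_pow_index_rep_append (x : Fin d) (u : Vertex d) :
    (p.src ^ p.index x) (p.rep x ++ u) = x :: p.right x u := by
  rw [(p.isTreeAut_src.pow _).apply_append, p.src_pow_index_rep]
  rfl

theorem tgt_pow_index_someConj_rep_append (x : Fin d) (u : Vertex d) :
    (p.tgt ^ p.index x) (p.someConj (p.rep x) ++ u) = act p.someConj x :: p.left x u := by
  rw [(p.isTreeAut_tgt.pow _).apply_append, ← p.someConj_pow_apply, p.src_pow_index_rep,
    p.isTreeAut_someConj.apply_singleton]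
  rfl

theorem exists_state_conjugator_eq (v : Vertex d) :
    ∀ p : ConjPair d, ∃ q : ConjPair d, q.src ∈ OS p.src ∧ q.tgt ∈ OS p.tgt ∧
      ∃ A B, IsPartialOrbitState p.src v A ∧ IsPartialOrbitState p.tgt (p.conjugator v) B ∧
        state p.conjugator v = B * q.conjugator * A⁻¹ := by
  induction v using Vertex.induction_on_length with
  | nil =>
    intro p
    exact ⟨p, self_mem_OS p.isTreeAut_src, self_mem_OS p.isTreeAut_tgt, 1, 1,
      isPartialOrbitState_one p.isTreeAut_src _, isPartialOrbitState_one p.isTreeAut_tgt _,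
      by simp [state_nil p.isTreeAut_conjugator]⟩
  | cons x w ih =>
    intro p
    set u := (p.right x)⁻¹ w
    have hu : p.right x u = w := (p.right x).apply_symm_apply w
    obtain ⟨q, hq_src, hq_tgt, A, B, hA, hB, hstate⟩ :=
      ih u ((p.isTreeAut_right x).inv.length_apply w) (p.child x)
    refine ⟨q, OS_subset_of_mem p.isTreeAut_src (p.child_src_mem_OS x) hq_src,
      OS_subset_of_mem p.isTreeAut_tgt (p.child_tgt_mem_OS x) hq_tgt,
      state (p.right x) u * A, state (p.left x) ((p.child x).conjugator u) * B, ?_, ?_, ?_⟩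
    · have := hA.append p.isTreeAut_src (p.index_lt_period x)
      rwa [p.src_pow_index_rep_append, state_append (p.isTreeAut_src.pow _), hu] at this
    · have hB' : IsPartialOrbitState (state (p.tgt ^ minimalPeriod p.tgt (p.someConj (p.rep x)))
          (p.someConj (p.rep x))) ((p.child x).conjugator u) B := by
        rwa [p.minimalPeriod_tgt_someConj]
      have := hB'.append p.isTreeAut_tgt
        (by rw [p.minimalPeriod_tgt_someConj]; exact p.index_lt_period x)
      rwa [p.tgt_pow_index_someConj_rep_append, state_append (p.isTreeAut_tgt.pow _),
        ← conjugator_cons] at this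
    · rw [← List.singleton_append, state_append p.isTreeAut_conjugator,
        state_conjugator_singleton,
        state_mul ((p.isTreeAut_left x).mul (p.child x).isTreeAut_conjugator)
          (p.isTreeAut_right x).inv,
        state_mul (p.isTreeAut_left x) (p.child x).isTreeAut_conjugator,
        state_inv (p.isTreeAut_right x), hstate]
      simp only [mul_inv_rev, mul_assoc]
      rfl

theorem conjugator_mul_src_mul_inv : p.conjugator * p.src * p.conjugator⁻¹ = p.tgt := by
  rw [mul_inv_eq_iff_eq_mul]
  exact Equiv.ext fun v => conjugator_apply_src v p

open Pointwise in
theorem finiteState_conjugator (hsrc : BoundedAut p.src) (htgt : BoundedAut p.tgt) :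
    FiniteState p.conjugator := by
  have hOS_src := (hsrc.finite_orbitPowStates p.isTreeAut_src).subset OS_subset_orbitPowStates
  have hOS_tgt := (htgt.finite_orbitPowStates p.isTreeAut_tgt).subset OS_subset_orbitPowStates
  have hpairs := (hOS_src.prod hOS_tgt).preimage (f := fun q : ConjPair d => (q.src, q.tgt))
    fun _ _ _ _ h => ConjPair.ext (congrArg Prod.fst h) (congrArg Prod.snd h)
  refine (((htgt.finite_orbitPowStates p.isTreeAut_tgt).mul (hpairs.image conjugator)).mul
    (hsrc.finite_orbitPowStates p.isTreeAut_src).inv).subset ?_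
  rintro _ ⟨v, rfl⟩
  obtain ⟨q, hq_src, hq_tgt, A, B, hA, hB, hstate⟩ := exists_state_conjugator_eq v p
  change state p.conjugator v ∈ _
  rw [hstate]
  exact Set.mul_mem_mul (Set.mul_mem_mul hB.mem_orbitPowStates ⟨q, ⟨hq_src, hq_tgt⟩, rfl⟩)
    (Set.inv_mem_inv.mpr hA.mem_orbitPowStates)

end ConjPair

theorem conj_in_AutT_iff_conj_in_FSG_of_bounded_general
    (d : ℕ) (a b : Equiv.Perm (Vertex d))
    (ha : IsTreeAut a)
    (hba : BoundedAut a) (hbb : BoundedAut b) :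
    (∃ h : Equiv.Perm (Vertex d), IsTreeAut h ∧ h * a * h⁻¹ = b) ↔
      (∃ h : Equiv.Perm (Vertex d), IsTreeAut h ∧ FiniteState h ∧ h * a * h⁻¹ = b) := by
  refine ⟨fun hconj => ?_, fun ⟨h, hh, _, hconj⟩ => ⟨h, hh, hconj⟩⟩
  let p : ConjPair d := ⟨a, b, ha, hconj⟩
  exact ⟨p.conjugator, p.isTreeAut_conjugator, p.finiteState_conjugator hba hbb,
    p.conjugator_mul_src_mul_inv⟩

/-- Two bounded automorphisms of the regular rooted `d`-ary
tree are conjugate in `Aut(T)` if and only if they are conjugate in the group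
`F(X)` of finite-state automorphisms. -/
theorem conj_in_AutT_iff_conj_in_FSG_of_bounded
    (d : ℕ) (hd : 2 ≤ d) (a b : Equiv.Perm (Vertex d))
    (ha : IsTreeAut a) (hb : IsTreeAut b)
    (hba : BoundedAut a) (hbb : BoundedAut b) :
    (∃ h : Equiv.Perm (Vertex d), IsTreeAut h ∧ h * a * h⁻¹ = b) ↔
      (∃ h : Equiv.Perm (Vertex d), IsTreeAut h ∧ FiniteState h ∧ h * a * h⁻¹ = b) :=
  conj_in_AutT_iff_conj_in_FSG_of_bounded_general d a b ha hba hbb
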